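/- Let K ≥ 1, d ≥ K, n ≥ 1, and λ_{W2}, λ_{W1}, λ_{H1} > 0. Then the infimum over (W₂, W₁, H̄₁) ∈ ℝ^{K×d} × ℝ^{d×d} × ℝ^{d×K} of (1/(2K))‖W₂W₁H̄₁ − I_K‖_F² + (λ_{W2}/2)‖W₂‖_F² + (λ_{W1}/2)‖W₁‖_F² + (nλ_{H1}/2)‖H̄₁‖_F² equals the infimum over (W₂, H̄) ∈ ℝ^{K×d} × ℝ^{d×K} of (1/(2K))‖W₂H̄ − I_K‖_F² + (λ_{W2}/2)‖W₂‖_F² + √(n·λ_{W1}·λ_{H1})·‖H̄‖_*. -/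

import Mathlib

open Matrix Finset

noncomputable section

/-- Squared Frobenius norm of a real matrix. -/
def frobSq {m n : Type*} [Fintype m] [Fintype n] (A : Matrix m n ℝ) : ℝ :=
  ∑ i, ∑ j, (A i j) ^ 2

/-- Nuclear norm of a real matrix: trace of the PSD square root of `ZᵀZ`
(= `ZᴴZ` over `ℝ`), i.e., the sum of the singular values. -/
def nuclearNorm {m n : Type*} [Fintype m] [Fintype n] [DecidableEq n]
    (Z : Matrix m n ℝ) : ℝ :=
  ((Matrix.posSemidef_conjTranspose_mul_self Z).1.eigenvectorUnitary.1 *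
      diagonal (Real.sqrt ∘ (Matrix.posSemidef_conjTranspose_mul_self Z).1.eigenvalues) *
      (star (Matrix.posSemidef_conjTranspose_mul_self Z).1.eigenvectorUnitary : Matrix n n ℝ)).trace

/-!
Write a thin SVD `Z = U diag(σ) Vᴴ`. Then `‖Z‖_* = tr(PᴴZ)` for the partial isometry `P = UVᴴ`,
and since `Pᴴ` does not increase Frobenius norms, AM–GM for the Frobenius inner product gives
`√(ab)‖WH‖_* ≤ (a/2)‖W‖² + (b/2)‖H‖²`. The balanced factorization
`W = c • U diag(√σ) Uᴴ`, `H = c⁻¹ • U diag(√σ) Vᴴ` attains equality for a suitable `c > 0`.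
So minimizing over `W₁, H̄₁` with `W₁H̄₁ = H̄` fixed replaces the two Frobenius penalties by
`√(nλ_{W1}λ_{H1})‖H̄‖_*`, and the two infima agree.
-/

theorem iInf_iInf_eq_iInf_of_forall_exists_le {R α β γ : Type*} [ConditionallyCompleteLattice R]
    [Nonempty α] [Nonempty β] [Nonempty γ] {g : α → β → R} {f : γ → R}
    (hf : BddBelow (Set.range f)) (hgf : ∀ x y, ∃ z, f z ≤ g x y)
    (hfg : ∀ z, ∃ x y, g x y ≤ f z) :
    ⨅ x, ⨅ y, g x y = ⨅ z, f z := by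
  obtain ⟨c, hc⟩ := hf
  have hg (x : α) (y : β) : c ≤ g x y :=
    let ⟨z, hz⟩ := hgf x y
    (hc ⟨z, rfl⟩).trans hz
  have hgx (x : α) : BddBelow (Set.range (g x)) := ⟨c, by rintro _ ⟨y, rfl⟩; exact hg x y⟩
  have hgxy : BddBelow (Set.range fun x => ⨅ y, g x y) :=
    ⟨c, by rintro _ ⟨x, rfl⟩; exact le_ciInf (hg x)⟩
  refine le_antisymm (le_ciInf fun z => ?_) (le_ciInf fun x => le_ciInf fun y => ?_)
  · obtain ⟨x, y, h⟩ := hfg z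
    exact (ciInf_le hgxy x).trans ((ciInf_le (hgx x) y).trans h)
  · obtain ⟨z, h⟩ := hgf x y
    exact (ciInf_le ⟨c, hc⟩ z).trans h

namespace Matrix

variable {l m n p : Type*} [Fintype l] [Fintype m] [Fintype n] [Fintype p]

lemma frobSq_nonneg (A : Matrix m n ℝ) : 0 ≤ frobSq A :=
  sum_nonneg fun _ _ => sum_nonneg fun _ _ => sq_nonneg _

lemma frobSq_eq_trace (A : Matrix m n ℝ) : frobSq A = (Aᴴ * A).trace := by
  simp only [frobSq, trace, diag, mul_apply, conjTranspose_apply, star_trivial, sq]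
  exact sum_comm

lemma frobSq_conjTranspose (A : Matrix m n ℝ) : frobSq Aᴴ = frobSq A := by
  rw [frobSq_eq_trace, frobSq_eq_trace, conjTranspose_conjTranspose, trace_mul_comm]

lemma frobSq_smul (c : ℝ) (A : Matrix m n ℝ) : frobSq (c • A) = c ^ 2 * frobSq A := by
  simp [frobSq, mul_sum, mul_pow]

lemma frobSq_sub (X Y : Matrix m n ℝ) :
    frobSq (X - Y) = frobSq X - 2 * (Xᴴ * Y).trace + frobSq Y := by
  have hYX : (Yᴴ * X).trace = (Xᴴ * Y).trace := by
    simpa using trace_conjTranspose (Xᴴ * Y)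
  simp only [frobSq_eq_trace, conjTranspose_sub, Matrix.sub_mul, Matrix.mul_sub, trace_sub, hYX]
  ring

lemma two_mul_trace_le_frobSq_add (X Y : Matrix m n ℝ) :
    2 * (Xᴴ * Y).trace ≤ frobSq X + frobSq Y := by
  linarith [frobSq_nonneg (X - Y), frobSq_sub X Y]

lemma frobSq_conjTranspose_mul_le {P : Matrix m n ℝ} (hP : P * Pᴴ * P = P) (A : Matrix m l ℝ) :
    frobSq (Pᴴ * A) ≤ frobSq A := by
  have hcross : (Aᴴ * (P * Pᴴ * A)).trace = frobSq (Pᴴ * A) := by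
    simp only [frobSq_eq_trace, conjTranspose_mul, conjTranspose_conjTranspose, Matrix.mul_assoc]
  have hproj : frobSq (P * Pᴴ * A) = frobSq (Pᴴ * A) := by
    simp only [frobSq_eq_trace, conjTranspose_mul, conjTranspose_conjTranspose, Matrix.mul_assoc]
    rw [← Matrix.mul_assoc P Pᴴ, ← Matrix.mul_assoc (P * Pᴴ) P, hP]
  linarith [frobSq_nonneg (A - P * Pᴴ * A), frobSq_sub A (P * Pᴴ * A)]

variable [DecidableEq n]

lemma mul_diagonal_eq_self {U : Matrix m n ℝ} {μ e : n → ℝ} (hU : Uᴴ * U = diagonal μ)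
    (he : ∀ j, μ j ≠ 0 → e j = 1) : U * diagonal e = U := by
  ext i j
  rw [mul_diagonal]
  by_cases hj : μ j = 0
  · have hcol : star (fun i => U i j) ⬝ᵥ (fun i => U i j) = 0 :=
      (congrFun (congrFun hU j) j).trans (by simp [hj])
    simp [congrFun (dotProduct_star_self_eq_zero.mp hcol) i]
  · rw [he j hj, mul_one]

/-- A thin SVD. `σ j / σ j` is `1` where `σ j ≠ 0` and `0` where `σ j = 0`, so the columns of `U`
are orthonormal on the support of `σ` and vanish off it. -/
theorem exists_svd (Z : Matrix m n ℝ) :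
    ∃ (U : Matrix m n ℝ) (σ : n → ℝ) (V : Matrix n n ℝ), (∀ j, 0 ≤ σ j) ∧ Vᴴ * V = 1 ∧
      Uᴴ * U = diagonal (fun j => σ j / σ j) ∧ Z = U * diagonal σ * Vᴴ ∧
      nuclearNorm Z = ∑ j, σ j := by
  have hH := (posSemidef_conjTranspose_mul_self Z).1
  have hμ := (posSemidef_conjTranspose_mul_self Z).eigenvalues_nonneg
  set V : Matrix n n ℝ := ↑hH.eigenvectorUnitary
  set σ : n → ℝ := fun j => √(hH.eigenvalues j)
  have hV : Vᴴ * V = 1 := mem_unitaryGroup_iff'.mp hH.eigenvectorUnitary.2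
  have hV' : V * Vᴴ = 1 := mem_unitaryGroup_iff.mp hH.eigenvectorUnitary.2
  have hB : (Z * V)ᴴ * (Z * V) = diagonal (fun j => σ j ^ 2) := by
    have h := hH.conjStarAlgAut_star_eigenvectorUnitary
    simp only [Unitary.conjStarAlgAut_apply, star_star, Unitary.coe_star] at h
    rw [conjTranspose_mul, Matrix.mul_assoc, ← Matrix.mul_assoc Zᴴ, ← Matrix.mul_assoc,
      ← star_eq_conjTranspose, h]
    congr 1
    ext j
    simp only [Function.comp_apply, RCLike.ofReal_real_eq_id, id, σ]
    exact (Real.sq_sqrt (hμ j)).symm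
  refine ⟨Z * V * diagonal σ⁻¹, σ, V, fun j => Real.sqrt_nonneg _, hV, ?_, ?_, ?_⟩
  · rw [conjTranspose_mul, diagonal_conjTranspose, Matrix.mul_assoc, ← Matrix.mul_assoc (Z * V)ᴴ,
      hB, diagonal_mul_diagonal, diagonal_mul_diagonal]
    congr 1
    ext j
    rcases eq_or_ne (σ j) 0 with h | h
    · simp [h]
    · simp only [Pi.star_apply, Pi.inv_apply, star_trivial]
      field_simp
  · rw [Matrix.mul_assoc (Z * V), diagonal_mul_diagonal, mul_diagonal_eq_self hB, Matrix.mul_assoc,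
      hV', Matrix.mul_one]
    intro j hj
    exact inv_mul_cancel₀ (pow_ne_zero_iff two_ne_zero |>.mp hj)
  · rw [nuclearNorm, trace_mul_comm, ← Matrix.mul_assoc, star_eq_conjTranspose, hV,
      Matrix.one_mul, trace_diagonal]
    rfl

theorem exists_partialIsometry_nuclearNorm_eq_trace (Z : Matrix m n ℝ) :
    ∃ P : Matrix m n ℝ, P * Pᴴ * P = P ∧ nuclearNorm Z = (Pᴴ * Z).trace := by
  obtain ⟨U, σ, V, -, hV, hU, rfl, hZ⟩ := exists_svd Z
  have hUU : U * Uᴴ * U = U := by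
    rw [Matrix.mul_assoc, hU]
    exact mul_diagonal_eq_self hU fun j hj => div_self fun h => hj (by simp [h])
  refine ⟨U * Vᴴ, ?_, ?_⟩
  · simp only [conjTranspose_mul, conjTranspose_conjTranspose, Matrix.mul_assoc]
    rw [← Matrix.mul_assoc Vᴴ V, hV, Matrix.one_mul, ← Matrix.mul_assoc U Uᴴ,
      ← Matrix.mul_assoc (U * Uᴴ), hUU]
  · rw [hZ, conjTranspose_mul, conjTranspose_conjTranspose, Matrix.mul_assoc, trace_mul_comm,
      Matrix.mul_assoc, Matrix.mul_assoc, hV, Matrix.mul_one, ← Matrix.mul_assoc, hU,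
      diagonal_mul_diagonal, trace_diagonal]
    exact sum_congr rfl fun j _ => (div_mul_cancel_of_imp id).symm

theorem two_mul_mul_nuclearNorm_mul_le (s t : ℝ) (A : Matrix m p ℝ) (B : Matrix p n ℝ) :
    2 * (s * t) * nuclearNorm (A * B) ≤ s ^ 2 * frobSq A + t ^ 2 * frobSq B := by
  obtain ⟨P, hP, hAB⟩ := exists_partialIsometry_nuclearNorm_eq_trace (A * B)
  calc 2 * (s * t) * nuclearNorm (A * B) = 2 * ((s • (Aᴴ * P))ᴴ * (t • B)).trace := by
        rw [hAB, conjTranspose_smul, star_trivial, Matrix.smul_mul, Matrix.mul_smul, smul_smul,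
          trace_smul, smul_eq_mul, conjTranspose_mul, conjTranspose_conjTranspose,
          Matrix.mul_assoc, mul_assoc]
    _ ≤ frobSq (s • (Aᴴ * P)) + frobSq (t • B) := two_mul_trace_le_frobSq_add _ _
    _ = s ^ 2 * frobSq (Pᴴ * A) + t ^ 2 * frobSq B := by
        rw [frobSq_smul, frobSq_smul, ← frobSq_conjTranspose (Aᴴ * P), conjTranspose_mul,
          conjTranspose_conjTranspose]
    _ ≤ s ^ 2 * frobSq A + t ^ 2 * frobSq B := by
        gcongr
        exact frobSq_conjTranspose_mul_le hP A

theorem exists_mul_eq_frobSq_eq_nuclearNorm (Z : Matrix m n ℝ) :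
    ∃ (W : Matrix m m ℝ) (H : Matrix m n ℝ),
      W * H = Z ∧ frobSq W = nuclearNorm Z ∧ frobSq H = nuclearNorm Z := by
  obtain ⟨U, σ, V, hσ, hV, hU, rfl, hZ⟩ := exists_svd Z
  set r : n → ℝ := fun j => √(σ j)
  have hr : diagonal r * (Uᴴ * U) * diagonal r = diagonal σ := by
    rw [hU, diagonal_mul_diagonal, diagonal_mul_diagonal]
    congr 1
    ext j
    rcases eq_or_ne (σ j) 0 with h | h
    · simp [h]
    · rw [div_self h, mul_one, Real.mul_self_sqrt (hσ j)]
  have hUσ : Uᴴ * U * diagonal σ = diagonal σ := by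
    rw [hU, diagonal_mul_diagonal]
    exact congrArg diagonal (funext fun j => div_mul_cancel_of_imp id)
  refine ⟨U * diagonal r * Uᴴ, U * diagonal r * Vᴴ, ?_, ?_, ?_⟩
  · rw [show U * diagonal r * Uᴴ * (U * diagonal r * Vᴴ)
        = U * (diagonal r * (Uᴴ * U) * diagonal r) * Vᴴ by simp only [Matrix.mul_assoc], hr]
  · have hW : (U * diagonal r * Uᴴ)ᴴ = U * diagonal r * Uᴴ := by
      simp [Matrix.mul_assoc]
    rw [frobSq_eq_trace, hW, show U * diagonal r * Uᴴ * (U * diagonal r * Uᴴ)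
        = U * (diagonal r * (Uᴴ * U) * diagonal r) * Uᴴ by simp only [Matrix.mul_assoc], hr,
      trace_mul_comm, ← Matrix.mul_assoc, hUσ, hZ, trace_diagonal]
  · rw [frobSq_eq_trace, show (U * diagonal r * Vᴴ)ᴴ * (U * diagonal r * Vᴴ)
        = V * (diagonal r * (Uᴴ * U) * diagonal r) * Vᴴ by
          simp [Matrix.mul_assoc], hr,
      trace_mul_comm, ← Matrix.mul_assoc, hV, Matrix.one_mul, hZ, trace_diagonal]

lemma nuclearNorm_nonneg (Z : Matrix m n ℝ) : 0 ≤ nuclearNorm Z := by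
  obtain ⟨-, σ, -, hσ, -, -, -, hZ⟩ := exists_svd Z
  exact hZ ▸ sum_nonneg fun j _ => hσ j

theorem sqrt_mul_mul_nuclearNorm_mul_le {a b : ℝ} (ha : 0 ≤ a) (hb : 0 ≤ b)
    (A : Matrix m p ℝ) (B : Matrix p n ℝ) :
    √(a * b) * nuclearNorm (A * B) ≤ a / 2 * frobSq A + b / 2 * frobSq B := by
  have h := two_mul_mul_nuclearNorm_mul_le (√a) (√b) A B
  rw [Real.sq_sqrt ha, Real.sq_sqrt hb] at h
  rw [Real.sqrt_mul ha]
  linarith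

theorem exists_mul_eq_add_frobSq_eq {a b : ℝ} (ha : 0 < a) (hb : 0 < b) (Z : Matrix m n ℝ) :
    ∃ (W : Matrix m m ℝ) (H : Matrix m n ℝ),
      W * H = Z ∧ a / 2 * frobSq W + b / 2 * frobSq H = √(a * b) * nuclearNorm Z := by
  obtain ⟨W, H, hWH, hW, hH⟩ := exists_mul_eq_frobSq_eq_nuclearNorm Z
  obtain ⟨s, hs, rfl⟩ : ∃ s, 0 < s ∧ a = s ^ 2 := ⟨√a, by positivity, (Real.sq_sqrt ha.le).symm⟩
  obtain ⟨t, ht, rfl⟩ : ∃ t, 0 < t ∧ b = t ^ 2 := ⟨√b, by positivity, (Real.sq_sqrt hb.le).symm⟩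
  have hc : 0 < √(t / s) := by positivity
  refine ⟨√(t / s) • W, (√(t / s))⁻¹ • H, ?_, ?_⟩
  · rw [Matrix.smul_mul, Matrix.mul_smul, smul_smul, mul_inv_cancel₀ hc.ne', one_smul, hWH]
  · rw [frobSq_smul, frobSq_smul, inv_pow, Real.sq_sqrt (by positivity), hW, hH, ← mul_pow,
      Real.sqrt_sq (by positivity)]
    field_simp
    ring

theorem iInf_iInf_add_frobSq_eq_iInf_add_nuclearNorm (F : Matrix m n ℝ → ℝ)
    (hF : BddBelow (Set.range F)) {a b : ℝ} (ha : 0 < a) (hb : 0 < b) :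
    ⨅ W : Matrix m m ℝ, ⨅ H : Matrix m n ℝ, (F (W * H) + a / 2 * frobSq W + b / 2 * frobSq H)
      = ⨅ Z, (F Z + √(a * b) * nuclearNorm Z) := by
  obtain ⟨c, hc⟩ := hF
  refine iInf_iInf_eq_iInf_of_forall_exists_le ⟨c, ?_⟩ (fun W H => ⟨W * H, ?_⟩) fun Z => ?_
  · rintro _ ⟨Z, rfl⟩
    exact le_add_of_le_of_nonneg (hc ⟨Z, rfl⟩)
      (mul_nonneg (Real.sqrt_nonneg _) (nuclearNorm_nonneg Z))
  · linarith [sqrt_mul_mul_nuclearNorm_mul_le ha.le hb.le W H]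
  · obtain ⟨W, H, rfl, h⟩ := exists_mul_eq_add_frobSq_eq ha hb Z
    exact ⟨W, H, by linarith⟩

end Matrix

theorem three_factor_reduces_to_nuclear_on_features_general
    (K d n : ℕ) (hn : 1 ≤ n)
    (lW2 lW1 lH1 : ℝ) (hlW1 : 0 < lW1) (hlH1 : 0 < lH1) :
    (⨅ W2 : Matrix (Fin K) (Fin d) ℝ, ⨅ W1 : Matrix (Fin d) (Fin d) ℝ,
      ⨅ Hb1 : Matrix (Fin d) (Fin K) ℝ,
        (1 / (2 * (K : ℝ)) * frobSq (W2 * W1 * Hb1 - 1)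
          + lW2 / 2 * frobSq W2 + lW1 / 2 * frobSq W1
          + ((n : ℝ) * lH1) / 2 * frobSq Hb1))
    = ⨅ W2 : Matrix (Fin K) (Fin d) ℝ, ⨅ Hb : Matrix (Fin d) (Fin K) ℝ,
        (1 / (2 * (K : ℝ)) * frobSq (W2 * Hb - 1)
          + lW2 / 2 * frobSq W2
          + Real.sqrt ((n : ℝ) * lW1 * lH1) * nuclearNorm Hb) := by
  have hb : 0 < (n : ℝ) * lH1 := mul_pos (by exact_mod_cast hn) hlH1
  refine iInf_congr fun W2 => ?_
  have hF : BddBelow (Set.range fun Z : Matrix (Fin d) (Fin K) ℝ =>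
      1 / (2 * (K : ℝ)) * frobSq (W2 * Z - 1) + lW2 / 2 * frobSq W2) := by
    refine ⟨lW2 / 2 * frobSq W2, ?_⟩
    rintro _ ⟨Z, rfl⟩
    exact le_add_of_nonneg_left (by positivity [frobSq_nonneg (W2 * Z - 1)])
  simp_rw [Matrix.mul_assoc]
  rw [Matrix.iInf_iInf_add_frobSq_eq_iInf_add_nuclearNorm _ hF hlW1 hb,
    show lW1 * (n * lH1) = n * lW1 * lH1 by ring]

/-- Reduction of the three-factor extended UFM objective to a two-factor objective with
a nuclear-norm penalty on the deeper features `H̄ = W₁H̄₁`: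
`inf_{W₂,W₁,H̄₁} (1/(2K))‖W₂W₁H̄₁ − I‖² + (λ_{W2}/2)‖W₂‖² + (λ_{W1}/2)‖W₁‖² + (nλ_{H1}/2)‖H̄₁‖²
 = inf_{W₂,H̄} (1/(2K))‖W₂H̄ − I‖² + (λ_{W2}/2)‖W₂‖² + √(nλ_{W1}λ_{H1})‖H̄‖_*`. -/
theorem three_factor_reduces_to_nuclear_on_features
    (K d n : ℕ) (hK : 1 ≤ K) (hd : K ≤ d) (hn : 1 ≤ n)
    (lW2 lW1 lH1 : ℝ) (hlW2 : 0 < lW2) (hlW1 : 0 < lW1) (hlH1 : 0 < lH1) :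
    (⨅ W2 : Matrix (Fin K) (Fin d) ℝ, ⨅ W1 : Matrix (Fin d) (Fin d) ℝ,
      ⨅ Hb1 : Matrix (Fin d) (Fin K) ℝ,
        (1 / (2 * (K : ℝ)) * frobSq (W2 * W1 * Hb1 - 1)
          + lW2 / 2 * frobSq W2 + lW1 / 2 * frobSq W1
          + ((n : ℝ) * lH1) / 2 * frobSq Hb1))
    = ⨅ W2 : Matrix (Fin K) (Fin d) ℝ, ⨅ Hb : Matrix (Fin d) (Fin K) ℝ,
        (1 / (2 * (K : ℝ)) * frobSq (W2 * Hb - 1)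
          + lW2 / 2 * frobSq W2
          + Real.sqrt ((n : ℝ) * lW1 * lH1) * nuclearNorm Hb) :=
  three_factor_reduces_to_nuclear_on_features_general K d n hn lW2 lW1 lH1 hlW1 hlH1
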